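/- Let H be a history satisfying uniqueness of written values. Suppose the local history of a client C contains, in this order, transactions W_1, W_2, ..., W_n (n ≥ 2), where the only event of W_i is the write w(o_i)v_i and the objects o_1, ..., o_n are pairwise distinct (so W_1 causally precedes each W_k for k ≥ 2). Suppose H also contains a transaction W* containing a write event w(o_1)v*_1 with v*_1 ≠ v_1. Fix k with 2 ≤ k ≤ n, and suppose the local history of a client C_r contains a transaction ROT with read events r(o_1)v*_1 and r(o_k)v_k, and strictly later a transaction ROT1 with read events r(o_1)v_1 and r(o_k)v_k. Then there exists no transactional causal serialization for C_r of H. -/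

import Mathlib

/-!
Combinatorial model of transactional histories.
-/

/-- A transaction: a finite set of read events `(x, v)` (read of object `x`
returning value `v`) and a finite set of write events `(x, v)` (write of
value `v` to object `x`). -/
structure Tx (Obj : Type*) (Val : Type*) where
  reads : Set (Obj × Val)
  writes : Set (Obj × Val)
  reads_finite : reads.Finite
  writes_finite : writes.Finite

/-- A history: a set of clients, each with a finite sequence (list) of
transactions — its local history. -/
structure History (Client : Type*) (Obj : Type*) (Val : Type*) where
  locals : Client → List (Tx Obj Val)

variable {Client Obj Val : Type*}

/-- `T` is a transaction of the history `H`. -/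
def TxIn (H : History Client Obj Val) (T : Tx Obj Val) : Prop :=
  ∃ c : Client, T ∈ H.locals c

/-- `S` occurs strictly before `T` in the local history of client `c`. -/
def LocBefore (H : History Client Obj Val) (c : Client) (S T : Tx Obj Val) : Prop :=
  ∃ i j : ℕ, i < j ∧ (H.locals c)[i]? = some S ∧ (H.locals c)[j]? = some T

/-- `T` contains a write event on object `x`. -/
def WritesOn (T : Tx Obj Val) (x : Obj) : Prop :=
  ∃ v : Val, (x, v) ∈ T.writes

/-- Uniqueness of written values: every value written by a write event of the
history is distinct from `bot` and from the value written by every other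
write event in the history. -/
def UniqueWrites (H : History Client Obj Val) (bot : Val) : Prop :=
  (∀ T, TxIn H T → ∀ x v, (x, v) ∈ T.writes → v ≠ bot) ∧
  (∀ T T', TxIn H T → TxIn H T' → ∀ x x' v,
      (x, v) ∈ T.writes → (x', v) ∈ T'.writes → T = T' ∧ x = x')

/-- The causality relation of a history: the smallest transitive relation such
that `S` causally precedes `T` whenever (i) `S` occurs strictly before `T` in
some client's local history, or (ii) `S` contains a write event `w(x)v` and
`T` contains the read event `r(x)v`. -/
inductive Causal (H : History Client Obj Val) : Tx Obj Val → Tx Obj Val → Prop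
  | prog {S T : Tx Obj Val} (c : Client) : LocBefore H c S T → Causal H S T
  | readFrom {S T : Tx Obj Val} {x : Obj} {v : Val} :
      TxIn H S → TxIn H T → (x, v) ∈ S.writes → (x, v) ∈ T.reads → Causal H S T
  | trans {S T U : Tx Obj Val} : Causal H S T → Causal H T U → Causal H S U

/-- The set of transactions over which a serialization for client `C` ranges:
all transactions of the history containing at least one write event, together
with all transactions of `C`'s local history. -/
def Dom (H : History Client Obj Val) (C : Client) : Set (Tx Obj Val) :=
  {T | (TxIn H T ∧ T.writes.Nonempty) ∨ T ∈ H.locals C}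

/-- `lt` is a transactional causal serialization for client `C` of history `H`:
a strict linear order on `Dom H C` such that
(1) for every read event `r(x)v` with `v ≠ bot` in a transaction `T` of the
set, some transaction strictly preceding `T` contains a write event on `x`,
and the last such transaction contains the write event `w(x)v`;
(2) for every read event `r(x)bot` in a transaction `T` of the set, no
transaction strictly preceding `T` contains a write event on `x`;
(3) whenever a transaction `S` of the set causally precedes a transaction `T`
of the set, `S` strictly precedes `T`. -/
structure IsCausalSerialization (H : History Client Obj Val) (bot : Val)
    (C : Client) (lt : Tx Obj Val → Tx Obj Val → Prop) : Prop where
  irrefl : ∀ T ∈ Dom H C, ¬ lt T T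
  trans : ∀ S ∈ Dom H C, ∀ T ∈ Dom H C, ∀ U ∈ Dom H C, lt S T → lt T U → lt S U
  total : ∀ S ∈ Dom H C, ∀ T ∈ Dom H C, S ≠ T → lt S T ∨ lt T S
  read_val : ∀ T ∈ Dom H C, ∀ x v, (x, v) ∈ T.reads → v ≠ bot →
      ∃ W ∈ Dom H C, lt W T ∧ (x, v) ∈ W.writes ∧
        ∀ W' ∈ Dom H C, lt W' T → WritesOn W' x → W' = W ∨ lt W' W
  read_bot : ∀ T ∈ Dom H C, ∀ x, (x, bot) ∈ T.reads →
      ∀ W ∈ Dom H C, lt W T → ¬ WritesOn W x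
  causal_lt : ∀ S ∈ Dom H C, ∀ T ∈ Dom H C, Causal H S T → lt S T

/-!
A serialization must place every writer of `x` that causally precedes a reader of `x` before the
writer the reader reads from. Here `W 0` causally precedes `ROT`, which reads `o 0` from `Wstar`
(through the chain `W 0 → W k → ROT`), so `W 0` is serialized before `Wstar`; symmetrically
`Wstar` causally precedes `ROT1`, which reads `o 0` from `W 0`, so `Wstar` is serialized before
`W 0`.
-/

variable {H : History Client Obj Val}

theorem txIn_of_getElem? {c : Client} {i : ℕ} {T : Tx Obj Val}
    (h : (H.locals c)[i]? = some T) : TxIn H T :=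
  ⟨c, List.mem_of_getElem? h⟩

theorem LocBefore.left_mem {c : Client} {S T : Tx Obj Val} (h : LocBefore H c S T) :
    S ∈ H.locals c := by
  obtain ⟨i, -, -, hi, -⟩ := h
  exact List.mem_of_getElem? hi

theorem LocBefore.right_mem {c : Client} {S T : Tx Obj Val} (h : LocBefore H c S T) :
    T ∈ H.locals c := by
  obtain ⟨-, j, -, -, hj⟩ := h
  exact List.mem_of_getElem? hj

theorem mem_dom_of_mem_writes {C : Client} {T : Tx Obj Val} {x : Obj} {v : Val}
    (hT : TxIn H T) (hw : (x, v) ∈ T.writes) : T ∈ Dom H C :=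
  Or.inl ⟨hT, ⟨_, hw⟩⟩

theorem txIn_of_mem_dom {C : Client} {T : Tx Obj Val} (hT : T ∈ Dom H C) : TxIn H T :=
  hT.elim And.left fun h => ⟨C, h⟩

namespace IsCausalSerialization

variable {bot : Val} {C : Client} {lt : Tx Obj Val → Tx Obj Val → Prop}

theorem lt_of_causal_of_readFrom (hS : IsCausalSerialization H bot C lt)
    (hU : UniqueWrites H bot) {T W W' : Tx Obj Val} {x : Obj} {v : Val}
    (hT : T ∈ Dom H C) (hW : TxIn H W) (hW' : W' ∈ Dom H C)
    (hwrite : (x, v) ∈ W.writes) (hread : (x, v) ∈ T.reads)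
    (hW'x : WritesOn W' x) (hne : W' ≠ W) (hcausal : Causal H W' T) : lt W' W := by
  obtain ⟨Wr, hWr, -, hWrx, hlast⟩ := hS.read_val T hT x v hread (hU.1 W hW x v hwrite)
  obtain rfl : Wr = W := (hU.2 Wr W (txIn_of_mem_dom hWr) hW x x v hWrx hwrite).1
  exact (hlast W' hW' (hS.causal_lt W' hW' T hT hcausal) hW'x).resolve_left hne

theorem false_of_crossed_reads (hS : IsCausalSerialization H bot C lt)
    (hU : UniqueWrites H bot) {A B T T' : Tx Obj Val} {x : Obj} {a b : Val}
    (hA : TxIn H A) (hB : TxIn H B) (ha : (x, a) ∈ A.writes) (hb : (x, b) ∈ B.writes)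
    (hAB : A ≠ B) (hT : T ∈ Dom H C) (hT' : T' ∈ Dom H C)
    (hTb : (x, b) ∈ T.reads) (hAT : Causal H A T)
    (hT'a : (x, a) ∈ T'.reads) (hBT' : Causal H B T') : False := by
  have hADom : A ∈ Dom H C := mem_dom_of_mem_writes hA ha
  have hBDom : B ∈ Dom H C := mem_dom_of_mem_writes hB hb
  have hAB_lt : lt A B :=
    hS.lt_of_causal_of_readFrom hU hT hB hADom hb hTb ⟨a, ha⟩ hAB hAT
  have hBA_lt : lt B A :=
    hS.lt_of_causal_of_readFrom hU hT' hA hBDom ha hT'a ⟨b, hb⟩ hAB.symm hBT'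
  exact hS.irrefl A hADom (hS.trans A hADom B hBDom A hADom hAB_lt hBA_lt)

end IsCausalSerialization

/-- generalization of Statement 2 to a causal chain of writes
`w(o_1)v_1, …, w(o_n)v_n` by one client: if `ROT` returns a stale value
`v*_1 ≠ v_1` for `o_1` together with `v_k` for `o_k` (`2 ≤ k ≤ n`), and a
later `ROT1` returns `(v_1, v_k)`, then no transactional causal serialization
for `C_r` exists. -/
theorem stmt_3 {Client Obj Val : Type*} (bot : Val)
    (H : History Client Obj Val) (hU : UniqueWrites H bot)
    (C : Client) (n : ℕ) (hn : 2 ≤ n)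
    (W : Fin n → Tx Obj Val) (o : Fin n → Obj) (v : Fin n → Val)
    (hWw : ∀ i, (W i).writes = {(o i, v i)})
    (pos : Fin n → ℕ) (hpos : StrictMono pos)
    (hloc : ∀ i, (H.locals C)[pos i]? = some (W i))
    (Wstar : Tx Obj Val) (hWstar : TxIn H Wstar)
    (vstar : Val) (hws : (o ⟨0, by omega⟩, vstar) ∈ Wstar.writes)
    (hvs : vstar ≠ v ⟨0, by omega⟩)
    (k : Fin n) (hk : 0 < k.val)
    (Cr : Client) (ROT ROT1 : Tx Obj Val)
    (hord : LocBefore H Cr ROT ROT1)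
    (hrs : (o ⟨0, by omega⟩, vstar) ∈ ROT.reads)
    (hrk : (o k, v k) ∈ ROT.reads)
    (hr1 : (o ⟨0, by omega⟩, v ⟨0, by omega⟩) ∈ ROT1.reads) :
    ¬ ∃ lt : Tx Obj Val → Tx Obj Val → Prop,
        IsCausalSerialization H bot Cr lt := by
  rintro ⟨lt, hS⟩
  set i0 : Fin n := ⟨0, by omega⟩
  have hW (i : Fin n) : TxIn H (W i) := txIn_of_getElem? (hloc i)
  have hWwrite (i : Fin n) : (o i, v i) ∈ (W i).writes := by simp [hWw]
  have hne : W i0 ≠ Wstar := by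
    rintro rfl
    simp only [hWw, Set.mem_singleton_iff, Prod.mk.injEq, true_and] at hws
    exact hvs hws
  have hW0ROT : Causal H (W i0) ROT :=
    (Causal.prog C ⟨pos i0, pos k, hpos (show i0 < k from hk), hloc i0, hloc k⟩).trans
      (Causal.readFrom (hW k) ⟨Cr, hord.left_mem⟩ (hWwrite k) hrk)
  have hWstarROT1 : Causal H Wstar ROT1 :=
    (Causal.readFrom hWstar ⟨Cr, hord.left_mem⟩ hws hrs).trans (Causal.prog Cr hord)
  exact hS.false_of_crossed_reads hU (hW i0) hWstar (hWwrite i0) hws hne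
    (Or.inr hord.left_mem) (Or.inr hord.right_mem) hrs hW0ROT hr1 hWstarROT1
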